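/- arXiv:1910.03847 — 2 statements merged into one kernel-verified Lean document; each statement's English description precedes it below -/
import Mathlib

section
/- Let X be a real Banach space, φ : X → (-∞, +∞] proper convex l.s.c., z ∈ X, z* ∈ X*, λ > 0, and Ψ(x) = (1/2)‖x - z‖² + λφ(x) - λ⟨x, z*⟩. Then for every ε > 0 there exist x_ε ∈ X, u*_ε ∈ X* with ‖u*_ε‖ ≤ 1, y*_ε ∈ J_X(x_ε - z), and x*_ε ∈ ∂φ(x_ε) such that λz* - λx*_ε = y*_ε + ε u*_ε, where J_X is the duality mapping. -/
noncomputable section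

variable {X : Type*} [NormedAddCommGroup X] [NormedSpace ℝ X] [CompleteSpace X]

/-- The subdifferential of an extended-real-valued function `φ : X → (-∞,+∞]`,
viewed as a subset of `X × X*`: `(x, x*) ∈ ∂φ` iff `⟨y - x, x*⟩ + φ(x) ≤ φ(y)` for all `y`. -/
def subdiff (φ : X → EReal) : Set (X × (X →L[ℝ] ℝ)) :=
  {p | ∀ y : X, ((p.2 (y - p.1) : ℝ) : EReal) + φ p.1 ≤ φ y}

/-- Convexity for extended-real-valued functions. -/
def ERealConvexOn {E : Type*} [AddCommGroup E] [Module ℝ E] (φ : E → EReal) : Prop :=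
  ∀ x y : E, ∀ a b : ℝ, 0 ≤ a → 0 ≤ b → a + b = 1 →
    φ (a • x + b • y) ≤ (a : EReal) * φ x + (b : EReal) * φ y

/-- A function `X → (-∞,+∞]` is proper: it never takes the value `-∞` and is
finite somewhere. -/
def ProperFn {E : Type*} (φ : E → EReal) : Prop :=
  (∀ x, φ x ≠ ⊥) ∧ (∃ x, φ x ≠ ⊤)

/-- The duality mapping `J_X(x) = {x* : ⟨x, x*⟩ = ‖x‖² = ‖x*‖²}`. -/
def dualityMap (x : X) : Set (X →L[ℝ] ℝ) :=
  {x' | x' x = ‖x‖ ^ 2 ∧ ‖x‖ ^ 2 = ‖x'‖ ^ 2}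

/-- A monotone subset of `X × X*`. -/
def MonotoneSet (A : Set (X × (X →L[ℝ] ℝ))) : Prop :=
  ∀ p ∈ A, ∀ q ∈ A, 0 ≤ (p.2 - q.2) (p.1 - q.1)

/-- A maximal monotone subset of `X × X*`. -/
def MaximalMonotoneSet (A : Set (X × (X →L[ℝ] ℝ))) : Prop :=
  MonotoneSet A ∧
    ∀ p : X × (X →L[ℝ] ℝ), (∀ q ∈ A, 0 ≤ (p.2 - q.2) (p.1 - q.1)) → p ∈ A

/-- The Fitzpatrick function of an operator `A : X ⇉ X*`:
`H_A(x, x*) = sup {⟨u, x*⟩ + ⟨x, u*⟩ - ⟨u, u*⟩ : (u, u*) ∈ A}`. -/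
def fitz (A : Set (X × (X →L[ℝ] ℝ))) (p : X × (X →L[ℝ] ℝ)) : EReal :=
  ⨆ q ∈ A, ((p.2 q.1 + q.2 p.1 - q.2 q.1 : ℝ) : EReal)

/-- `(x*, x) ∈ ∂H_A(u, u*)`, the subdifferential of the Fitzpatrick function at `(u, u*)`
with the pairing `⟨(x*, x), (z, z*)⟩ = ⟨z, x*⟩ + ⟨x, z*⟩`:
`⟨z - u, x*⟩ + ⟨x, z* - u*⟩ + H(u, u*) ≤ H(z, z*)` for all `(z, z*)`. -/
def inSubdiffFitz (A : Set (X × (X →L[ℝ] ℝ))) (u : X) (u' : X →L[ℝ] ℝ)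
    (x' : X →L[ℝ] ℝ) (x : X) : Prop :=
  ∀ z : X, ∀ z' : X →L[ℝ] ℝ,
    ((x' (z - u) + (z' - u') x : ℝ) : EReal) + fitz A (u, u') ≤ fitz A (z, z')

/-!
Ekeland's principle, applied to `Ψ / λ` with constant `ε / λ`, gives a point `x_ε` at which
`Ψ / λ + (ε / λ) ‖· - x_ε‖` is minimal; `Ψ` is bounded below because `φ` has a continuous affine
minorant, obtained by separating a point from its closed convex epigraph. The sum rule, proved by
separating the epigraph of the convex summand from the strict hypograph of the negated continuous
one, then splits `0` into subgradients of `‖· - z‖² / (2λ) - z*`, of `φ` and of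
`(ε / λ) ‖· - x_ε‖`. The first, shifted by `z*` and scaled by `λ`, lies in `J(x_ε - z)`, and the
last has norm at most `ε / λ`.
-/

open Set Filter Topology

section Ekeland

variable {α : Type*} [MetricSpace α]

def ekelandSet (f : α → ℝ) (δ : ℝ) (x : α) : Set α :=
  {y | f y + δ * dist x y ≤ f x}

lemma self_mem_ekelandSet (f : α → ℝ) (δ : ℝ) (x : α) : x ∈ ekelandSet f δ x := by
  simp [ekelandSet]

lemma ekelandSet_subset {f : α → ℝ} {δ : ℝ} (hδ : 0 ≤ δ) {x y : α} (hy : y ∈ ekelandSet f δ x) :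
    ekelandSet f δ y ⊆ ekelandSet f δ x := fun w hw => by
  have := dist_triangle x y w
  simp only [ekelandSet, mem_ofPred_eq] at *
  nlinarith

lemma LowerSemicontinuous.isClosed_ekelandSet {f : α → ℝ} (hf : LowerSemicontinuous f) (δ : ℝ)
    (x : α) : IsClosed (ekelandSet f δ x) :=
  (hf.add (continuous_const.mul (continuous_const.dist continuous_id)).lowerSemicontinuous)
    |>.isClosed_preimage (f x)

lemma exists_mem_ekelandSet_forall_le_add {f : α → ℝ} (hbdd : BddBelow (range f)) (δ : ℝ)
    (x : α) {c : ℝ} (hc : 0 < c) :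
    ∃ y ∈ ekelandSet f δ x, ∀ y' ∈ ekelandSet f δ x, f y ≤ f y' + c := by
  have hne : (f '' ekelandSet f δ x).Nonempty := ⟨f x, x, self_mem_ekelandSet f δ x, rfl⟩
  obtain ⟨_, ⟨y, hy, rfl⟩, hlt⟩ := exists_lt_of_csInf_lt hne (lt_add_of_pos_right _ hc)
  exact ⟨y, hy, fun y' hy' => hlt.le.trans
    (add_le_add_left (csInf_le (hbdd.mono (image_subset_range _ _)) ⟨y', hy', rfl⟩) c)⟩

lemma mul_dist_le_of_forall_le_add {f : α → ℝ} {δ : ℝ} (hδ : 0 ≤ δ) {x y : α} {c : ℝ}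
    (hy : y ∈ ekelandSet f δ x) (hmin : ∀ y' ∈ ekelandSet f δ x, f y ≤ f y' + c) {y' : α}
    (hy' : y' ∈ ekelandSet f δ y) : δ * dist y y' ≤ c := by
  have := hmin y' (ekelandSet_subset hδ hy hy')
  simp only [ekelandSet, mem_ofPred_eq] at hy'
  linarith

variable [CompleteSpace α]

/-- Ekeland's variational principle. -/
theorem LowerSemicontinuous.exists_forall_le_add_dist {f : α → ℝ} (hf : LowerSemicontinuous f)
    (hbdd : BddBelow (range f)) {δ : ℝ} (hδ : 0 < δ) (x₀ : α) :
    ∃ x, f x ≤ f x₀ ∧ ∀ y, f x ≤ f y + δ * dist y x := by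
  set S := ekelandSet f δ
  choose! next next_mem next_le using fun x (c : ℝ) (hc : 0 < c) =>
    exists_mem_ekelandSet_forall_le_add hbdd δ x hc
  let u : ℕ → α := fun n =>
    Nat.rec (next x₀ ((1 / 2) ^ 0)) (fun k x => next x ((1 / 2) ^ (k + 1))) n
  have u_succ : ∀ n, u (n + 1) ∈ S (u n) := fun n => next_mem _ _ (by positivity)
  have u_dist : ∀ n, ∀ y ∈ S (u n), δ * dist (u n) y ≤ (1 / 2) ^ n := by
    rintro (_ | n) y hy <;> exact mul_dist_le_of_forall_le_add hδ.le
      (next_mem _ _ (by positivity)) (next_le _ _ (by positivity)) hy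
  have S_anti : Antitone (S ∘ u) :=
    antitone_nat_of_succ_le fun n => ekelandSet_subset hδ.le (u_succ n)
  have hcauchy : CauchySeq u := by
    refine cauchySeq_of_le_geometric_two (C := 2 / δ) fun n => ?_
    calc dist (u n) (u (n + 1)) ≤ (1 / 2) ^ n / δ := by
          rw [le_div_iff₀ hδ, mul_comm]; exact u_dist n _ (u_succ n)
      _ = 2 / δ / 2 / 2 ^ n := by rw [one_div_pow]; field_simp
  obtain ⟨x, hx⟩ := cauchySeq_tendsto_of_complete hcauchy
  have x_mem : ∀ n, x ∈ S (u n) := fun n =>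
    (hf.isClosed_ekelandSet δ _).mem_of_tendsto hx
      (eventually_atTop.2 ⟨n, fun m hm => S_anti hm (self_mem_ekelandSet f δ _)⟩)
  have tendsto_of_mem : ∀ y, (∀ n, y ∈ S (u n)) → Tendsto u atTop (𝓝 y) := by
    intro y hy
    have hlim : Tendsto (fun n : ℕ => (1 / 2 : ℝ) ^ n / δ) atTop (𝓝 0) := by
      simpa using (tendsto_pow_atTop_nhds_zero_of_lt_one (r := (1 / 2 : ℝ)) (by norm_num)
        (by norm_num)).div_const δ
    refine tendsto_iff_dist_tendsto_zero.2 (squeeze_zero (fun _ => dist_nonneg) (fun n => ?_) hlim)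
    rw [le_div_iff₀ hδ, mul_comm]
    exact u_dist n y (hy n)
  refine ⟨x, ?_, fun y => ?_⟩
  · have := ekelandSet_subset hδ.le (next_mem x₀ _ (by positivity)) (x_mem 0)
    simp only [ekelandSet, mem_ofPred_eq] at this
    nlinarith [dist_nonneg (x := x₀) (y := x)]
  · by_contra! hlt
    have hy : y ∈ S x := by
      simp only [S, ekelandSet, mem_ofPred_eq]
      rw [dist_comm]; exact hlt.le
    obtain rfl : y = x := tendsto_nhds_unique
      (tendsto_of_mem y fun n => ekelandSet_subset hδ.le (x_mem n) hy) hx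
    simp at hlt

theorem LowerSemicontinuous.exists_forall_le_add_dist_ereal {F : α → EReal}
    (hF : LowerSemicontinuous F) {m : ℝ} (hm : ∀ x, (m : EReal) ≤ F x) {x₀ : α} (hx₀ : F x₀ ≠ ⊤)
    {δ : ℝ} (hδ : 0 < δ) : ∃ x, F x ≤ F x₀ ∧ ∀ y, F x ≤ F y + ((δ * dist y x : ℝ) : EReal) := by
  set K := {x | F x ≤ F x₀}
  have : CompleteSpace K := (hF.isClosed_preimage (F x₀)).completeSpace_coe
  have coe_toReal : ∀ x : K, ((F x).toReal : EReal) = F x := fun x =>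
    EReal.coe_toReal (ne_top_of_le_ne_top hx₀ x.2) (ne_bot_of_le_ne_bot (EReal.coe_ne_bot m) (hm x))
  set f : K → ℝ := fun x => (F x).toReal
  have hf : LowerSemicontinuous f := by
    refine lowerSemicontinuous_iff_isClosed_preimage.2 fun r => ?_
    convert (hF.comp continuous_subtype_val).isClosed_preimage (r : EReal) using 1
    ext x
    simp only [mem_preimage, mem_Iic, Function.comp_apply, f]
    rw [← EReal.coe_le_coe_iff, coe_toReal x]
  have hbdd : BddBelow (range f) := ⟨m, by
    rintro _ ⟨x, rfl⟩
    exact EReal.coe_le_coe_iff.1 ((hm x).trans_eq (coe_toReal x).symm)⟩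
  obtain ⟨x, -, hx⟩ := hf.exists_forall_le_add_dist hbdd hδ ⟨x₀, le_refl (F x₀)⟩
  refine ⟨x, x.2, fun y => ?_⟩
  by_cases hy : y ∈ K
  · rw [← coe_toReal x, ← coe_toReal ⟨y, hy⟩]
    exact_mod_cast hx ⟨y, hy⟩
  · calc F x ≤ F x₀ := x.2
      _ ≤ F y := (not_le.1 hy).le
      _ ≤ F y + ((δ * dist y x : ℝ) : EReal) :=
        le_add_of_nonneg_right (EReal.coe_nonneg.2 (by positivity))

end Ekeland

section Separation

def epigraph {E : Type*} (g : E → EReal) : Set (E × ℝ) :=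
  {p | g p.1 ≤ p.2}

lemma ERealConvexOn.convex_epigraph {E : Type*} [AddCommGroup E] [Module ℝ E] {g : E → EReal}
    (hg : ERealConvexOn g) : Convex ℝ (epigraph g) := by
  rintro ⟨x, s⟩ hx ⟨y, t⟩ hy a b ha hb hab
  calc g (a • x + b • y) ≤ (a : EReal) * g x + (b : EReal) * g y := hg x y a b ha hb hab
    _ ≤ (a : EReal) * s + (b : EReal) * t := by
      gcongr
      exacts [hx, hy]
    _ = ((a * s + b * t : ℝ) : EReal) := by norm_cast

lemma LowerSemicontinuous.isClosed_epigraph_real {E : Type*} [TopologicalSpace E]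
    {g : E → EReal} (hg : LowerSemicontinuous g) : IsClosed (epigraph g) :=
  hg.isClosed_epigraph.preimage
    (continuous_fst.prodMk (continuous_coe_real_ereal.comp continuous_snd))

variable {E : Type*} [AddCommGroup E] [Module ℝ E] [TopologicalSpace E]

lemma ContinuousLinearMap.exists_pos_mul_sub_of_lt (Λ : E × ℝ →L[ℝ] ℝ) {x : E} {t₁ t₂ : ℝ}
    (ht : t₁ ≤ t₂) (hΛ : Λ (x, t₁) < Λ (x, t₂)) :
    ∃ c > 0, ∃ w : E →L[ℝ] ℝ, ∀ y t, Λ (y, t) = c * (t - w y) := by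
  have hsplit : ∀ y t, Λ (y, t) = Λ (y, 0) + t * Λ (0, 1) := fun y t => by
    rw [← smul_eq_mul, ← map_smul, ← map_add, Prod.smul_mk, smul_zero, smul_eq_mul, mul_one,
      Prod.mk_add_mk, add_zero, zero_add]
  have hc : 0 < Λ (0, 1) := by
    rw [hsplit x t₁, hsplit x t₂] at hΛ
    nlinarith
  refine ⟨Λ (0, 1), hc, -(Λ (0, 1))⁻¹ • Λ.comp (ContinuousLinearMap.inl ℝ E ℝ), fun y t => ?_⟩
  rw [hsplit y t]
  simp only [smul_apply, comp_apply, inl_apply, smul_eq_mul, neg_mul, sub_neg_eq_add]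
  field_simp
  ring

variable [IsTopologicalAddGroup E] [ContinuousSMul ℝ E]

theorem ERealConvexOn.exists_affine_le [LocallyConvexSpace ℝ E] {g : E → EReal}
    (hg : ERealConvexOn g) (hproper : ProperFn g) (hlsc : LowerSemicontinuous g) :
    ∃ (w : E →L[ℝ] ℝ) (c : ℝ), ∀ y, ((w y + c : ℝ) : EReal) ≤ g y := by
  obtain ⟨hbot, x₀, hx₀⟩ := hproper
  set r := (g x₀).toReal
  have hr : g x₀ = r := (EReal.coe_toReal hx₀ (hbot x₀)).symm
  have hbelow : (x₀, r - 1) ∉ epigraph g := by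
    simp only [epigraph, mem_ofPred_eq, hr, EReal.coe_le_coe_iff, not_le]
    linarith
  obtain ⟨Λ, s, hΛs, hsΛ⟩ :=
    geometric_hahn_banach_point_closed hg.convex_epigraph hlsc.isClosed_epigraph_real hbelow
  have hon : (x₀, r) ∈ epigraph g := hr.le
  obtain ⟨c, hc, w, hΛ⟩ := Λ.exists_pos_mul_sub_of_lt (by linarith) (hΛs.trans (hsΛ _ hon))
  refine ⟨w, s / c, fun y => EReal.le_of_forall_lt_iff_le.1 fun t ht => ?_⟩
  have := hsΛ (y, t) ht.le
  rw [hΛ, ← div_lt_iff₀' hc] at this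
  exact_mod_cast (by linarith : w y + s / c ≤ t)

/-- The sandwich theorem. -/
theorem ERealConvexOn.exists_affine_between {h : E → ℝ} (hh : ConcaveOn ℝ univ h)
    (hhc : Continuous h) {g : E → EReal} (hg : ERealConvexOn g) (hhg : ∀ y, (h y : EReal) ≤ g y)
    {x₀ : E} (hx₀ : g x₀ ≠ ⊤) :
    ∃ (w : E →L[ℝ] ℝ) (c : ℝ), ∀ y, h y ≤ w y + c ∧ ((w y + c : ℝ) : EReal) ≤ g y := by
  set H := {p : E × ℝ | p.2 < h p.1}
  have hHopen : IsOpen H := isOpen_lt continuous_snd (hhc.comp continuous_fst)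
  have hHconv : Convex ℝ H := by simpa using hh.convex_strict_hypograph
  have hdisj : Disjoint H (epigraph g) := disjoint_left.2 fun p hpH hpE =>
    (((EReal.coe_lt_coe_iff.2 hpH).trans_le (hhg p.1)).trans_le hpE).false
  obtain ⟨Λ, s, hΛs, hsΛ⟩ := geometric_hahn_banach_open hHconv hHopen hg.convex_epigraph hdisj
  set r := (g x₀).toReal
  have hr : g x₀ = r :=
    (EReal.coe_toReal hx₀ (ne_bot_of_le_ne_bot (EReal.coe_ne_bot _) (hhg x₀))).symm
  have hhr : h x₀ ≤ r := EReal.coe_le_coe_iff.1 (hr ▸ hhg x₀)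
  have hbelow : (x₀, h x₀ - 1) ∈ H := show h x₀ - 1 < h x₀ from sub_one_lt _
  obtain ⟨c, hc, w, hΛ⟩ := Λ.exists_pos_mul_sub_of_lt (by linarith)
    ((hΛs _ hbelow).trans_le (hsΛ (x₀, r) hr.le))
  refine ⟨w, s / c, fun y => ⟨?_, EReal.le_of_forall_lt_iff_le.1 fun t ht => ?_⟩⟩
  · by_contra! hlt
    have := hΛs (y, w y + s / c) hlt
    rw [hΛ, add_sub_cancel_left, mul_div_cancel₀ _ hc.ne'] at this
    exact this.false
  · have := hsΛ (y, t) ht.le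
    rw [hΛ, ← div_le_iff₀' hc] at this
    exact_mod_cast (by linarith : w y + s / c ≤ t)

end Separation

section Subdifferential

variable {E : Type*} [NormedAddCommGroup E] [NormedSpace ℝ E]

lemma mem_subdiff_coe_iff {f : E → ℝ} {x : E} {w : E →L[ℝ] ℝ} :
    (x, w) ∈ subdiff (fun y => (f y : EReal)) ↔ ∀ y, w (y - x) + f x ≤ f y := by
  simp only [subdiff, mem_ofPred_eq]
  norm_cast

lemma ConvexOn.erealConvexOn_coe {f : E → ℝ} (hf : ConvexOn ℝ univ f) :
    ERealConvexOn fun x => (f x : EReal) := fun x y a b ha hb hab => by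
  have := hf.2 (mem_univ x) (mem_univ y) ha hb hab
  rw [smul_eq_mul, smul_eq_mul] at this
  beta_reduce
  exact_mod_cast this

lemma ContinuousLinearMap.norm_le_of_forall_apply_le {ℓ : E →L[ℝ] ℝ} {δ : ℝ} (hδ : 0 ≤ δ)
    (h : ∀ d, ℓ d ≤ δ * ‖d‖) : ‖ℓ‖ ≤ δ :=
  ℓ.opNorm_le_bound hδ fun d => abs_le.2
    ⟨by simpa [norm_neg] using neg_le_neg (h (-d)), h d⟩

theorem exists_mem_subdiff_of_forall_add_le {f : E → ℝ} (hf : ConvexOn ℝ univ f)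
    (hfc : Continuous f) {g : E → EReal} (hg : ERealConvexOn g) {x : E} (hx : g x ≠ ⊤)
    (hx' : g x ≠ ⊥) (hmin : ∀ y, (f x : EReal) + g x ≤ f y + g y) :
    ∃ w, (x, w) ∈ subdiff (fun y => (f y : EReal)) ∧ (x, -w) ∈ subdiff g := by
  set r := (g x).toReal
  have hr : g x = r := (EReal.coe_toReal hx hx').symm
  have hsandwich : ∀ y, ((f x + r - f y : ℝ) : EReal) ≤ g y := fun y => by
    have := EReal.sub_le_of_le_add' (hmin y)
    rw [hr] at this
    exact_mod_cast this
  obtain ⟨w, c, hw⟩ := hg.exists_affine_between (h := fun y => f x + r - f y)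
    ((concaveOn_const _ convex_univ).sub hf) (by fun_prop) hsandwich hx
  have hwx : w x + c = r := le_antisymm (EReal.coe_le_coe_iff.1 ((hw x).2.trans_eq hr))
    (by linarith [(hw x).1])
  refine ⟨-w, mem_subdiff_coe_iff.2 fun y => ?_, fun y => ?_⟩
  · have := (hw y).1
    simp only [neg_apply, map_sub]
    linarith
  · simp only [neg_neg]
    calc ((w (y - x) : ℝ) : EReal) + g x = ((w y + c : ℝ) : EReal) := by
          rw [hr, map_sub, ← EReal.coe_add, ← hwx]; ring_nf
      _ ≤ g y := (hw y).2

theorem exists_mem_subdiff_add_norm_le {f : E → ℝ} (hf : ConvexOn ℝ univ f)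
    (hfc : Continuous f) {g : E → EReal} (hg : ERealConvexOn g) {x : E} (hx : g x ≠ ⊤)
    (hx' : g x ≠ ⊥) {δ : ℝ} (hδ : 0 ≤ δ)
    (hmin : ∀ y, (f x : EReal) + g x ≤ f y + g y + ((δ * ‖y - x‖ : ℝ) : EReal)) :
    ∃ v x', (x, v) ∈ subdiff (fun y => (f y : EReal)) ∧ (x, x') ∈ subdiff g ∧ ‖v + x'‖ ≤ δ := by
  have hdist : ConvexOn ℝ univ fun y => δ * ‖y - x‖ := by
    simpa [← dist_eq_norm] using (convexOn_univ_dist x).smul hδ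
  obtain ⟨w, hw, hwg⟩ := exists_mem_subdiff_of_forall_add_le (hf.add hdist) (by fun_prop) hg
    hx hx' fun y => by simpa [add_right_comm] using hmin y
  obtain ⟨v, hv, hvg⟩ := exists_mem_subdiff_of_forall_add_le hf hfc (x := x)
    (g := fun y => ((δ * ‖y - x‖ - w y : ℝ) : EReal))
    (hdist.sub ((w : E →ₗ[ℝ] ℝ).concaveOn convex_univ)).erealConvexOn_coe
    (EReal.coe_ne_top _) (EReal.coe_ne_bot _) fun y => by
      have := mem_subdiff_coe_iff.1 hw y
      simp only [map_sub, Pi.add_apply, sub_self, norm_zero, mul_zero, add_zero] at this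
      norm_cast
      rw [sub_self, norm_zero, mul_zero]
      linarith
  refine ⟨v, -w, hv, hwg, ?_⟩
  rw [← norm_neg]
  refine ContinuousLinearMap.norm_le_of_forall_apply_le hδ fun d => ?_
  have := mem_subdiff_coe_iff.1 hvg (x + d)
  simp only [add_sub_cancel_left, neg_apply, sub_self, norm_zero, mul_zero, zero_sub, map_add]
    at this
  simp only [neg_add_rev, neg_neg, add_apply, neg_apply]
  linarith


lemma nonpos_of_forall_pos_le_mul {a b : ℝ} (h : ∀ t : ℝ, 0 < t → a ≤ t * b) : a ≤ 0 := by
  have : Tendsto (fun t => t * b) (𝓝[>] 0) (𝓝 0) := by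
    simpa using ((tendsto_id (x := 𝓝 (0 : ℝ))).mul_const b).mono_left nhdsWithin_le_nhds
  exact ge_of_tendsto this (eventually_nhdsWithin_of_forall h)

theorem mem_dualityMap_of_forall_le {x : E} {x' : E →L[ℝ] ℝ}
    (h : ∀ u, ‖x‖ ^ 2 / 2 + x' (u - x) ≤ ‖u‖ ^ 2 / 2) : x' ∈ dualityMap x := by
  have hbound : ∀ d, x' d ≤ ‖x‖ * ‖d‖ := fun d => by
    suffices ∀ t : ℝ, 0 < t → x' d - ‖x‖ * ‖d‖ ≤ t * (‖d‖ ^ 2 / 2) by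
      linarith [nonpos_of_forall_pos_le_mul this]
    intro t ht
    have h₁ := h (x + t • d)
    rw [add_sub_cancel_left, map_smul, smul_eq_mul] at h₁
    have h₂ : ‖x + t • d‖ ≤ ‖x‖ + t * ‖d‖ :=
      (norm_add_le _ _).trans_eq (by rw [norm_smul, Real.norm_of_nonneg ht.le])
    have h₃ := pow_le_pow_left₀ (norm_nonneg _) h₂ 2
    exact le_of_mul_le_mul_left (by nlinarith) ht
  have hlower : ‖x‖ ^ 2 ≤ x' x := by
    suffices ∀ t : ℝ, 0 < t → ‖x‖ ^ 2 - x' x ≤ t * (‖x‖ ^ 2 / 2) by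
      linarith [nonpos_of_forall_pos_le_mul this]
    intro t ht
    have h₁ := h ((1 - t) • x)
    rw [show (1 - t) • x - x = -t • x by module, map_smul, smul_eq_mul, norm_smul, mul_pow,
      Real.norm_eq_abs, sq_abs] at h₁
    exact le_of_mul_le_mul_left (by nlinarith) ht
  have hnorm : ‖x'‖ ≤ ‖x‖ := x'.norm_le_of_forall_apply_le (norm_nonneg x) hbound
  have hupper : x' x ≤ ‖x'‖ * ‖x‖ := (le_abs_self _).trans (x'.le_opNorm x)
  exact ⟨by nlinarith [norm_nonneg x'], by nlinarith [norm_nonneg x, norm_nonneg x']⟩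

lemma exists_forall_le_mul_sq_norm_sub_add (ℓ : E →L[ℝ] ℝ) (z : E) {c : ℝ} (hc : 0 < c) :
    ∃ m, ∀ y, m ≤ c * ‖y - z‖ ^ 2 + ℓ y := by
  refine ⟨ℓ z - ‖ℓ‖ ^ 2 / (4 * c), fun y => ?_⟩
  have hℓ : -(‖ℓ‖ * ‖y - z‖) ≤ ℓ (y - z) := (abs_le.1 (ℓ.le_opNorm (y - z))).1
  rw [map_sub] at hℓ
  have hsq : 0 ≤ (2 * c * ‖y - z‖ - ‖ℓ‖) ^ 2 / (4 * c) := by positivity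
  have hexpand : (2 * c * ‖y - z‖ - ‖ℓ‖) ^ 2 / (4 * c) =
      c * ‖y - z‖ ^ 2 - ‖ℓ‖ * ‖y - z‖ + ‖ℓ‖ ^ 2 / (4 * c) := by
    field_simp; ring
  linarith

lemma convexOn_mul_sq_norm_sub_sub (ℓ : E →L[ℝ] ℝ) (z : E) {c : ℝ} (hc : 0 ≤ c) :
    ConvexOn ℝ univ fun y => c * ‖y - z‖ ^ 2 - ℓ y :=
  ((((convexOn_univ_dist z).pow (fun _ _ => dist_nonneg) 2).smul hc).sub
    ((ℓ : E →ₗ[ℝ] ℝ).concaveOn convex_univ)).congr fun y _ => by simp [dist_eq_norm]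

theorem ERealConvexOn.exists_forall_le_quadratic_add {g : E → EReal} (hg : ERealConvexOn g)
    (hproper : ProperFn g) (hlsc : LowerSemicontinuous g) (ℓ : E →L[ℝ] ℝ) (z : E) {c : ℝ}
    (hc : 0 < c) : ∃ m : ℝ, ∀ y, (m : EReal) ≤ ((c * ‖y - z‖ ^ 2 - ℓ y : ℝ) : EReal) + g y := by
  obtain ⟨a, b, hab⟩ := hg.exists_affine_le hproper hlsc
  obtain ⟨m, hm⟩ := exists_forall_le_mul_sq_norm_sub_add (a - ℓ) z hc
  refine ⟨m + b, fun y => ?_⟩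
  calc ((m + b : ℝ) : EReal) ≤ ((c * ‖y - z‖ ^ 2 - ℓ y + (a y + b) : ℝ) : EReal) := by
        have := hm y
        rw [sub_apply] at this
        exact_mod_cast (by linarith : m + b ≤ c * ‖y - z‖ ^ 2 - ℓ y + (a y + b))
    _ ≤ _ := by rw [EReal.coe_add]; exact add_le_add_right (hab y) _

lemma smul_add_mem_dualityMap_of_mem_subdiff {lam : ℝ} (hlam : 0 < lam) {z x : E}
    {z' v : E →L[ℝ] ℝ}
    (hv : (x, v) ∈ subdiff fun y => (((2 * lam)⁻¹ * ‖y - z‖ ^ 2 - z' y : ℝ) : EReal)) :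
    lam • (v + z') ∈ dualityMap (x - z) := mem_dualityMap_of_forall_le fun u => by
  have hvu := mem_subdiff_coe_iff.1 hv (u + z)
  rw [show u + z - x = u - (x - z) by abel, add_sub_cancel_right] at hvu
  have hz' : z' (u - (x - z)) = z' (u + z) - z' x := by rw [← map_sub]; congr 1; abel
  have hlam2 : lam * (2 * lam)⁻¹ = 1 / 2 := by field_simp
  simp only [smul_apply, add_apply, smul_eq_mul, hz']
  nlinarith [mul_le_mul_of_nonneg_left hvu hlam.le]

end Subdifferential

/-- approximate stationarity from Ekeland's principle:
`λz* - λx*_ε = y*_ε + ε u*_ε` with `y*_ε ∈ J(x_ε - z)`, `x*_ε ∈ ∂φ(x_ε)`, `‖u*_ε‖ ≤ 1`. -/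
theorem ekeland_approx (φ : X → EReal) (hproper : ProperFn φ)
    (hconv : ERealConvexOn φ) (hlsc : LowerSemicontinuous φ)
    (z : X) (z' : X →L[ℝ] ℝ) (lam : ℝ) (hlam : 0 < lam) :
    ∀ ε : ℝ, 0 < ε →
      ∃ (xe : X) (u' y' x' : X →L[ℝ] ℝ),
        ‖u'‖ ≤ 1 ∧ y' ∈ dualityMap (xe - z) ∧ (xe, x') ∈ subdiff φ ∧
          lam • z' - lam • x' = y' + ε • u' := by
  intro ε hε
  set f : X → ℝ := fun y => (2 * lam)⁻¹ * ‖y - z‖ ^ 2 - z' y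
  -- `F = Ψ / λ`, so that `φ` needs no rescaling
  set F : X → EReal := fun y => (f y : EReal) + φ y
  have hF : LowerSemicontinuous F :=
    (continuous_coe_real_ereal.comp (by fun_prop)).lowerSemicontinuous.add' hlsc fun _ =>
      EReal.continuousAt_add (.inl (EReal.coe_ne_top _)) (.inl (EReal.coe_ne_bot _))
  obtain ⟨m, hm⟩ := hconv.exists_forall_le_quadratic_add hproper hlsc z' z (c := (2 * lam)⁻¹)
    (by positivity)
  obtain ⟨x₀, hx₀⟩ := hproper.2
  have hFx₀ : F x₀ ≠ ⊤ := EReal.add_ne_top (EReal.coe_ne_top _) hx₀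
  obtain ⟨xe, hxe₀, hxe⟩ :=
    hF.exists_forall_le_add_dist_ereal hm hFx₀ (δ := ε / lam) (by positivity)
  have hφxe : φ xe ≠ ⊤ := (EReal.add_ne_top_iff_ne_top_right (EReal.coe_ne_bot _)
    (EReal.coe_ne_top _)).1 (ne_top_of_le_ne_top hFx₀ hxe₀)
  obtain ⟨v, x', hv, hx', hvx'⟩ := exists_mem_subdiff_add_norm_le
    (convexOn_mul_sq_norm_sub_sub z' z (c := (2 * lam)⁻¹) (by positivity)) (by fun_prop) hconv
    hφxe (hproper.1 xe) (δ := ε / lam) (by positivity) fun y => by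
      simpa only [dist_eq_norm] using hxe y
  refine ⟨xe, -(lam / ε) • (v + x'), lam • (v + z'), x',
    ?_, smul_add_mem_dualityMap_of_mem_subdiff hlam hv, hx', ?_⟩
  · rw [norm_smul, norm_neg, Real.norm_of_nonneg (by positivity)]
    calc lam / ε * ‖v + x'‖ ≤ lam / ε * (ε / lam) := by gcongr
      _ = 1 := by field_simp
  · rw [smul_smul, mul_neg, mul_div_cancel₀ _ hε.ne']
    module
end
end

section
/- Let A : X ⇉ X* be a maximal monotone operator with Fitzpatrick function H. If there exists (u, u*) such that (x*, x) ∈ ∂H(u, u*) and ⟨u - x, u* - x*⟩ ≥ 0, then (x, x*) ∈ A. -/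
noncomputable section

variable {X : Type*} [NormedAddCommGroup X] [NormedSpace ℝ X] [CompleteSpace X]

/-!
Test the subgradient inequality of `H` at `(u, u*)` against a point `(y, y*) ∈ A`. There
`H(y, y*) = ⟨y, y*⟩` by monotonicity, while `H(u, u*) ≥ ⟨u, u*⟩` by maximality: otherwise
`(u, u*)` would be monotonically related to `A`, hence in `A`. The two estimates combine to
`⟨x - y, x* - y*⟩ ≥ ⟨u - x, u* - x*⟩ ≥ 0`, so `(x, x*)` is monotonically related to `A`, and
maximality puts it in `A`.
-/

section Fitzpatrick

variable {A : Set (X × (X →L[ℝ] ℝ))}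

omit [CompleteSpace X]

theorem le_fitz_of_mem {q : X × (X →L[ℝ] ℝ)} (hq : q ∈ A) (p : X × (X →L[ℝ] ℝ)) :
    ((p.2 q.1 + q.2 p.1 - q.2 q.1 : ℝ) : EReal) ≤ fitz A p :=
  le_iSup₂_of_le q hq le_rfl

theorem MonotoneSet.fitz_le_of_mem (hA : MonotoneSet A) {p : X × (X →L[ℝ] ℝ)} (hp : p ∈ A) :
    fitz A p ≤ (p.2 p.1 : EReal) := by
  refine iSup₂_le fun q hq => EReal.coe_le_coe_iff.mpr ?_
  have := hA p hp q hq
  simp only [sub_apply, map_sub] at this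
  linarith

theorem MaximalMonotoneSet.le_fitz (hA : MaximalMonotoneSet A) (p : X × (X →L[ℝ] ℝ)) :
    (p.2 p.1 : EReal) ≤ fitz A p := by
  by_cases hrel : ∀ q ∈ A, 0 ≤ (p.2 - q.2) (p.1 - q.1)
  · simpa using le_fitz_of_mem (hA.2 p hrel) p
  · obtain ⟨q, hq, hneg⟩ := not_forall₂.mp hrel
    refine le_trans (EReal.coe_le_coe_iff.mpr ?_) (le_fitz_of_mem hq p)
    simp only [sub_apply, map_sub] at hneg
    linarith

theorem MaximalMonotoneSet.subdiffFitz_le_pairing (hA : MaximalMonotoneSet A)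
    {u x : X} {u' x' : X →L[ℝ] ℝ} (hsub : inSubdiffFitz A u u' x' x)
    {q : X × (X →L[ℝ] ℝ)} (hq : q ∈ A) :
    x' (q.1 - u) + (q.2 - u') x + u' u ≤ q.2 q.1 := by
  have key : ((x' (q.1 - u) + (q.2 - u') x : ℝ) : EReal) + (u' u : EReal) ≤ q.2 q.1 :=
    calc _ ≤ ((x' (q.1 - u) + (q.2 - u') x : ℝ) : EReal) + fitz A (u, u') := by
          gcongr; exact hA.le_fitz (u, u')
      _ ≤ fitz A q := hsub q.1 q.2
      _ ≤ q.2 q.1 := hA.1.fitz_le_of_mem hq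
  exact_mod_cast key

end Fitzpatrick

/-- if `(x*, x) ∈ ∂H(u, u*)` for some `(u, u*)` with `⟨u - x, u* - x*⟩ ≥ 0`,
then `(x, x*) ∈ A`. -/
theorem mem_of_subdiffFitz (A : Set (X × (X →L[ℝ] ℝ))) (hA : MaximalMonotoneSet A)
    (x : X) (x' : X →L[ℝ] ℝ)
    (h : ∃ (u : X) (u' : X →L[ℝ] ℝ),
      inSubdiffFitz A u u' x' x ∧ 0 ≤ (u' - x') (u - x)) :
    (x, x') ∈ A := by
  obtain ⟨u, u', hsub, hux⟩ := h
  refine hA.2 (x, x') fun q hq => ?_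
  have hq_ineq := hA.subdiffFitz_le_pairing hsub hq
  simp only [sub_apply, map_sub] at hux hq_ineq ⊢
  linarith
end
end
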